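/- Let I = (I_1,…,I_r) be an ordered set partition of [n] of type λ, set u = u(I), and let G-tableaux W ∈ T_I(G) and U, Û ∈ U_I(G) satisfy W = δ(U) ≠ ζ(W) = δ(Û), with underlying path families π and π̂. Then there exist y ∈ S_λ and an adjacent-transposition generator s of S_λ such that U = U(π,u,yu), Û = U(π̂,u,ŷu), and ŷ = ys; in particular ℓ(ŷ) = ℓ(y) ± 1. -/

import Mathlib

/- Common combinatorial setup: star networks, covering path families,
   crossing/noncrossing statistics, and the base ring ℤ[q^{1/2},q^{-1/2}]. -/

open Equiv Finset
open scoped Classical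

noncomputable section

/-- The ring `ℤ[q^{1/2}, q^{-1/2}]`, realized as Laurent polynomials in the
variable `q^{1/2}` (so the exponent-`k` monomial is `q^{k/2}`). -/
abbrev R2 : Type := LaurentPolynomial ℤ

/-- `q^{k/2}`. -/
def Qp (k : ℤ) : R2 := LaurentPolynomial.T k

/-- `q`. -/
def qq : R2 := LaurentPolynomial.T 2

/-- Coxeter length of a permutation, i.e. its inversion number. -/
def len {n : ℕ} (w : Perm (Fin n)) : ℕ :=
  ((univ : Finset (Fin n × Fin n)).filter fun p => p.1 < p.2 ∧ w p.2 < w p.1).card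

/-- Membership in the interval `J = [a,b] ⊆ [n]`. -/
def memJ {n : ℕ} (J : Fin n × Fin n) (i : Fin n) : Prop := J.1 ≤ i ∧ i ≤ J.2

/-- Membership in the subgroup `S_J ≤ S_n` generated by the adjacent
transpositions `s_a, …, s_{b-1}` of the interval `J = [a,b]`; equivalently,
the permutations supported on `[a,b]`. -/
def inSJ {n : ℕ} (J : Fin n × Fin n) (w : Perm (Fin n)) : Prop :=
  ∀ i, w i ≠ i → memJ J i

/-- A path family covering the star network `G_{J_1} ∘ ⋯ ∘ G_{J_m}` is
faithfully encoded by the permutation of the wire positions realized at each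
simple-star factor: at factor `p` the paths whose current positions lie in
`J_p` pass through the central vertex and are permuted arbitrarily within
`J_p` (every entering and leaving edge being used exactly once), while all
other paths use their unique horizontal edge.  Thus a covering family is a
sequence `vs` of permutations with `vs p` supported on `J_p`. -/
def IsPathFamily {n m : ℕ} (Js : Fin m → Fin n × Fin n)
    (vs : Fin m → Perm (Fin n)) : Prop :=
  ∀ p, inSJ (Js p) (vs p)

/-- The position of the path starting at source `i` just before factor `k`
(as a permutation of sources). -/
def posAt {n m : ℕ} (vs : Fin m → Perm (Fin n)) (k : ℕ) : Perm (Fin n) :=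
  (((List.ofFn vs).take k).reverse).prod

/-- The type of a covering path family: the path starting at source `i`
terminates at sink `typeOf vs i`. -/
def typeOf {n m : ℕ} (vs : Fin m → Perm (Fin n)) : Perm (Fin n) := posAt vs m

/-- The path from source `i` passes through the central vertex of the factor
`G_{J_p}`. -/
def centeredAt {n m : ℕ} (Js : Fin m → Fin n × Fin n) (vs : Fin m → Perm (Fin n))
    (p : Fin m) (i : Fin n) : Prop :=
  (Js p).1 < (Js p).2 ∧ memJ (Js p) (posAt vs p i)

/-- The paths from sources `i` and `j` both pass through the central vertex of
the factor `G_{J_p}`. -/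
def meetAt {n m : ℕ} (Js : Fin m → Fin n × Fin n) (vs : Fin m → Perm (Fin n))
    (p : Fin m) (i j : Fin n) : Prop :=
  centeredAt Js vs p i ∧ centeredAt Js vs p j

/-- The triple `(π_i, π_j, p)` is a crossing: the two paths intersect at the
central vertex of `G_{J_p}` and cross there. -/
def crossingAt {n m : ℕ} (Js : Fin m → Fin n × Fin n) (vs : Fin m → Perm (Fin n))
    (p : Fin m) (i j : Fin n) : Prop :=
  meetAt Js vs p i j ∧
    ¬ ((posAt vs p i < posAt vs p j) ↔ (posAt vs (p.1 + 1) i < posAt vs (p.1 + 1) j))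

/-- `cross(π)`: the number of crossings of the path family. -/
def crossNum {n m : ℕ} (Js : Fin m → Fin n × Fin n)
    (vs : Fin m → Perm (Fin n)) : ℕ :=
  ((univ : Finset ((Fin n × Fin n) × Fin m)).filter fun x =>
    x.1.1 < x.1.2 ∧ crossingAt Js vs x.2 x.1.1 x.1.2).card

/-- The triple `(π_i, π_j, p)` is a noncrossing with `π_i` entering and
leaving the central vertex of `G_{J_p}` below `π_j`. -/
def noncrossBelow {n m : ℕ} (Js : Fin m → Fin n × Fin n) (vs : Fin m → Perm (Fin n))
    (p : Fin m) (i j : Fin n) : Prop :=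
  meetAt Js vs p i j ∧
    posAt vs p i < posAt vs p j ∧ posAt vs (p.1 + 1) i < posAt vs (p.1 + 1) j

/-- `incross(U)` for a tableau `U` containing the paths of `π`, recorded via
the function `col` assigning to each path (index) the index of the column of
`U` containing it: the number of inverted noncrossings, i.e. noncrossings
`(π_i, π_j, p)` (with `π_i` below `π_j`) such that `π_j` lies in an earlier
column of `U` than `π_i`. -/
def incrossNum {n m : ℕ} (Js : Fin m → Fin n × Fin n) (vs : Fin m → Perm (Fin n))
    (col : Fin n → ℕ) : ℕ :=
  ((univ : Finset ((Fin n × Fin n) × Fin m)).filter fun x =>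
    noncrossBelow Js vs x.2 x.1.1 x.1.2 ∧ col x.1.2 < col x.1.1).card

/-- The number of crossings of the two paths `π_i, π_j` strictly before the
factor `G_{J_p}`. -/
def crossBefore {n m : ℕ} (Js : Fin m → Fin n × Fin n) (vs : Fin m → Perm (Fin n))
    (p : Fin m) (i j : Fin n) : ℕ :=
  ((univ : Finset (Fin m)).filter fun k => k < p ∧ crossingAt Js vs k i j).card

/-- The triple `(π_i, π_j, p)` is defective: the paths meet at the central
vertex of `G_{J_p}` having previously crossed an odd number of times. -/
def defectiveAt {n m : ℕ} (Js : Fin m → Fin n × Fin n) (vs : Fin m → Perm (Fin n))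
    (p : Fin m) (i j : Fin n) : Prop :=
  meetAt Js vs p i j ∧ Odd (crossBefore Js vs p i j)

/-- `dfct(π)`: the number of defective triples of the path family. -/
def dfctNum {n m : ℕ} (Js : Fin m → Fin n × Fin n)
    (vs : Fin m → Perm (Fin n)) : ℕ :=
  ((univ : Finset ((Fin n × Fin n) × Fin m)).filter fun x =>
    x.1.1 < x.1.2 ∧ defectiveAt Js vs x.2 x.1.1 x.1.2).card

/-- `cdncross(W)`: the number of defective noncrossings between pairs of
paths appearing in the same column of the tableau recorded by `col`. -/
def cdncrossNum {n m : ℕ} (Js : Fin m → Fin n × Fin n) (vs : Fin m → Perm (Fin n))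
    (col : Fin n → ℕ) : ℕ :=
  ((univ : Finset ((Fin n × Fin n) × Fin m)).filter fun x =>
    x.1.1 < x.1.2 ∧ defectiveAt Js vs x.2 x.1.1 x.1.2 ∧
      ¬ crossingAt Js vs x.2 x.1.1 x.1.2 ∧ col x.1.1 = col x.1.2).card

/-- The adjacent transposition `s_{i+1}` (0-indexed: swaps positions `i` and
`i+1`). -/
def swp {n : ℕ} (i : ℕ) (h : i + 1 < n) : Perm (Fin n) :=
  Equiv.swap ⟨i, by omega⟩ ⟨i + 1, h⟩

end
/- Young subgroups, minimal coset representatives, the induced sign character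
`ε_q^λ`, and column-strict tableaux (encoded by column assignments). -/

noncomputable section
open Equiv Finset
open scoped Classical

/-- Given a composition `lam = (λ_1, …, λ_r)` of `n`, the index of the block
`B_k = [λ_1 + ⋯ + λ_{k-1} + 1, λ_1 + ⋯ + λ_k]` containing the (0-indexed)
position `i`. -/
def blockIdx (lam : List ℕ) (i : ℕ) : ℕ :=
  ((List.range lam.length).filter fun k => (lam.take (k + 1)).sum ≤ i).length

/-- Membership in the Young subgroup `S_λ`: the permutations preserving each
block `B_k`. -/
def inYoung {n : ℕ} (lam : List ℕ) (w : Perm (Fin n)) : Prop :=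
  ∀ i : Fin n, blockIdx lam ((w i : Fin n) : ℕ) = blockIdx lam (i : ℕ)

/-- `u` is the minimum-length representative of its coset `S_λ u`
(in the paper's conventions, of the left coset `u S_λ` used in the
factorization `w = w_- w^*`): `u` has no inversions whose two values lie in a
common block. -/
def isMinRep {n : ℕ} (lam : List ℕ) (u : Perm (Fin n)) : Prop :=
  ∀ i j : Fin n, i < j →
    blockIdx lam ((u i : Fin n) : ℕ) = blockIdx lam ((u j : Fin n) : ℕ) →
      u i < u j

/-- The induced sign character `ε_q^λ = sgn ↑_{H_λ(q)}^{H_n(q)}`, computed in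
the natural basis: `H_n(q)` is a free right `H_λ(q)`-module with basis
`{T_u}` indexed by the minimum-length coset representatives, every basis
element factors as `T_{τ∘u} = T_u T_τ` with `τ ∈ S_λ`, the sign character
sends `T_τ` to `(-1)^{ℓ(τ)}`, and the character of the induced module
`H_n(q) ⊗_{H_λ(q)} sgn` is obtained by summing the diagonal coefficients. -/
def epsChar {n : ℕ} {H : Type*} [Ring H] [Algebra R2 H] (lam : List ℕ)
    (T : Module.Basis (Perm (Fin n)) R2 H) (h : H) : R2 :=
  ∑ u ∈ (univ : Finset (Perm (Fin n))).filter (fun u => isMinRep lam u),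
    ∑ τ ∈ (univ : Finset (Perm (Fin n))).filter (fun τ => inYoung lam τ),
      (-1 : R2) ^ len τ * T.repr (h * T u) (τ * u)

/-- A column-strict tableau of shape `λᵗ` (whose columns therefore have
lengths `λ_1, …, λ_r`) filled with the paths of a covering path family of
type `typeOf vs`, encoded by the assignment `f` sending each path to the
index of its column: column `k` must have `λ_k` entries, and since the
entries of a column are arranged bottom-to-top in increasing order of source
index, column-strictness says that the sink indices of the paths in a common
column also increase with the source indices. -/
def IsColStrictAssign {n m : ℕ} (lam : List ℕ) (vs : Fin m → Perm (Fin n))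
    (f : Fin n → Fin lam.length) : Prop :=
  (∀ k : Fin lam.length,
      ((univ : Finset (Fin n)).filter fun i => f i = k).card = lam.get k) ∧
    ∀ i j : Fin n, f i = f j → i < j → typeOf vs i < typeOf vs j

end
/- The data of the involution ζ on the tableau set T_I.  An ordered set
partition `I = (I_1, …, I_r)` of `[n]` of type `λ` is encoded by the
permutation `u = u(I)` (increasing on each block `B_k`, with `I_k = u(B_k)`);
an element `U(π, u, yu)` of `U_I(G)` is encoded by the covering path family
`π` (with `typeOf π = u ∘ y ∘ u⁻¹` for some `y ∈ S_λ`); its image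
`W = δ(U(π,u,yu)) ∈ T_I(G)` is the tableau of shape `λᵗ` whose `k`-th column
contains the paths with sources in `I_k`, so the column of the path `i` in
`W` is `colOf lam u i`. -/

noncomputable section
open Equiv Finset
open scoped Classical

/-- The column of the path `π_i` in the tableau `δ(U(π,u,yu)) ∈ T_I`. -/
def colOf {n : ℕ} (lam : List ℕ) (u : Perm (Fin n)) (i : Fin n) : ℕ :=
  blockIdx lam ((u⁻¹ i : Fin n) : ℕ)

/-- Column `c` of the tableau `δ(U(π,u,yu))` is column-strict: its sink
indices increase (bottom to top) together with its source indices. -/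
def colStrictCol {n m : ℕ} (lam : List ℕ) (u : Perm (Fin n))
    (vs : Fin m → Perm (Fin n)) (c : ℕ) : Prop :=
  ∀ i i' : Fin n, colOf lam u i = c → colOf lam u i' = c → i < i' →
    typeOf vs i < typeOf vs i'

/-- The path family obtained by swapping the terminal subpaths of the paths
from sources `i` and `i'`, beginning at the central vertex of the factor
`G_{J_p}`: the permutation realized at factor `p` is composed with the
transposition of the two leaving positions. -/
def zetaSwap {n m : ℕ} (vs : Fin m → Perm (Fin n)) (p : Fin m)
    (i i' : Fin n) : Fin m → Perm (Fin n) :=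
  fun k => if k = p then
    Equiv.swap (posAt vs (p.1 + 1) i) (posAt vs (p.1 + 1) i') * vs p
  else vs k

/-- The data entering the definition of the involution `ζ = ζ_I` at a
non-column-strict tableau `W = δ(U(π,u,yu)) ∈ T_I(G)`:
`tc` is the greatest index of a non-column-strict column of `W`; `p` is the
greatest index such that at least two paths of column `tc` pass through the
interior vertex of `G_{J_p}`; and `j, j'` are the two positions in block `tc`
whose paths `π_{u_j}, π_{u_{j'}}` (through that vertex) have the
right-to-left lexicographically greatest pair of sink indices, normalized so
that the sink of `π_{u_{j'}}` is the larger.  Then `ζ(W)` is obtained from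
`W` by replacing `π` with `zetaSwap vs p (u j) (u j')`. -/
structure ZetaData {n m : ℕ} (Js : Fin m → Fin n × Fin n) (lam : List ℕ)
    (u : Perm (Fin n)) (vs : Fin m → Perm (Fin n)) : Type where
  tc : ℕ
  p : Fin m
  j : Fin n
  j' : Fin n
  htc : ¬ colStrictCol lam u vs tc
  htcMax : ∀ c : ℕ, tc < c → colStrictCol lam u vs c
  hpMeet : ∃ i i' : Fin n, i ≠ i' ∧ colOf lam u i = tc ∧ colOf lam u i' = tc ∧
    centeredAt Js vs p i ∧ centeredAt Js vs p i'
  hpMax : ∀ p' : Fin m, p < p' →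
    ¬ ∃ i i' : Fin n, i ≠ i' ∧ colOf lam u i = tc ∧ colOf lam u i' = tc ∧
      centeredAt Js vs p' i ∧ centeredAt Js vs p' i'
  hne : j ≠ j'
  hjcol : blockIdx lam (j : ℕ) = tc
  hjcol' : blockIdx lam (j' : ℕ) = tc
  hjcent : centeredAt Js vs p (u j)
  hjcent' : centeredAt Js vs p (u j')
  hord : typeOf vs (u j) < typeOf vs (u j')
  hmax : ∀ k k' : Fin n, k ≠ k' →
    blockIdx lam (k : ℕ) = tc → blockIdx lam (k' : ℕ) = tc →
    centeredAt Js vs p (u k) → centeredAt Js vs p (u k') →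
    typeOf vs (u k) < typeOf vs (u k') →
    (typeOf vs (u k') < typeOf vs (u j') ∨
      (k' = j' ∧ typeOf vs (u k) ≤ typeOf vs (u j)))

/-- The number `b` of paths of `π` which enter the factor `G_{J_p}` between
the paths from sources `i` and `i'`, and which also leave `G_{J_p}` between
the same two paths. -/
def betweenNum {n m : ℕ} (Js : Fin m → Fin n × Fin n) (vs : Fin m → Perm (Fin n))
    (p : Fin m) (i i' : Fin n) : ℕ :=
  ((univ : Finset (Fin n)).filter fun x =>
    x ≠ i ∧ x ≠ i' ∧ centeredAt Js vs p x ∧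
      (min (posAt vs p i) (posAt vs p i') < posAt vs p x ∧
        posAt vs p x < max (posAt vs p i) (posAt vs p i')) ∧
      (min (posAt vs (p.1 + 1) i) (posAt vs (p.1 + 1) i') < posAt vs (p.1 + 1) x ∧
        posAt vs (p.1 + 1) x < max (posAt vs (p.1 + 1) i) (posAt vs (p.1 + 1) i'))).card

end
noncomputable section
open Equiv Finset
open scoped Classical

/-!
Swapping the tails of `π_{u_j}` and `π_{u_{j'}}` at `G_{J_p}` composes the type of
`π` with the transposition of their two sinks, so `ŷ = s y` with `s` swapping
`y j` and `y j'`. Since `p` is the last factor at which two paths of column `t`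
meet, paths of column `t` keep their relative order after `G_{J_p}`; hence a path
of column `t` whose sink lies strictly between those of `π_{u_j}` and `π_{u_{j'}}`
would also pass through the interior vertex of `G_{J_p}`, contradicting the
choice of `(j, j')`. So `y j` and `y j'` are consecutive entries of one block,
`s` is an adjacent transposition of `S_λ`, and it changes the inversion number
by exactly one.
-/

section Length

variable {n : ℕ}

lemma swp_apply_val (k : ℕ) (hk : k + 1 < n) (z : Fin n) :
    ((swp k hk z : Fin n) : ℕ) =
      if (z : ℕ) = k then k + 1 else if (z : ℕ) = k + 1 then k else z := by
  unfold swp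
  rw [swap_apply_def]
  split_ifs <;> simp_all [Fin.ext_iff]

lemma swp_lt_swp_iff {k : ℕ} {hk : k + 1 < n} {c d : Fin n}
    (h : ¬ ((c : ℕ) = k ∧ (d : ℕ) = k + 1)) (h' : ¬ ((c : ℕ) = k + 1 ∧ (d : ℕ) = k)) :
    swp k hk c < swp k hk d ↔ c < d := by
  rw [Fin.lt_def, Fin.lt_def, swp_apply_val, swp_apply_val]
  split_ifs <;> omega

-- Left multiplication by `s_k` changes the inversion set only at the pair of
-- positions holding the values `k, k + 1`.
lemma len_swp_mul_of_lt {k : ℕ} (hk : k + 1 < n) {y : Perm (Fin n)}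
    (hlt : y⁻¹ ⟨k, by omega⟩ < y⁻¹ ⟨k + 1, hk⟩) :
    len (swp k hk * y) = len y + 1 := by
  set i₀ := y⁻¹ ⟨k, by omega⟩ with hi₀
  set j₀ := y⁻¹ ⟨k + 1, hk⟩ with hj₀
  have hnot : (i₀, j₀) ∉ (univ : Finset (Fin n × Fin n)).filter
      (fun x => x.1 < x.2 ∧ y x.2 < y x.1) := by
    simp [i₀, j₀]
  suffices hset : (univ : Finset (Fin n × Fin n)).filter
        (fun x => x.1 < x.2 ∧ (swp k hk * y) x.2 < (swp k hk * y) x.1) =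
      insert (i₀, j₀) ((univ : Finset (Fin n × Fin n)).filter
        (fun x => x.1 < x.2 ∧ y x.2 < y x.1)) by
    rw [len, hset, card_insert_of_notMem hnot, len]
  ext ⟨a, b⟩
  rw [mem_insert, mem_filter, mem_filter, Prod.mk.injEq]
  simp only [mem_univ, true_and, Perm.mul_apply]
  by_cases hab : a = i₀ ∧ b = j₀
  · obtain ⟨rfl, rfl⟩ := hab
    simpa [swp, i₀, j₀] using hlt
  by_cases hba : a = j₀ ∧ b = i₀
  · obtain ⟨rfl, rfl⟩ := hba
    simp [hab, not_lt_of_gt hlt]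
  rw [swp_lt_swp_iff]
  · simp [hab]
  all_goals
    rintro ⟨h₁, h₂⟩
    rw [hi₀, hj₀, Perm.eq_inv_iff_eq, Perm.eq_inv_iff_eq] at hab hba
    simp only [Fin.ext_iff] at hab hba
    omega

lemma len_swp_mul (k : ℕ) (hk : k + 1 < n) (y : Perm (Fin n)) :
    len (swp k hk * y) + 1 = len y ∨ len (swp k hk * y) = len y + 1 := by
  have hne : (⟨k, by omega⟩ : Fin n) ≠ ⟨k + 1, hk⟩ := by simp
  rcases lt_or_gt_of_ne (y⁻¹.injective.ne hne) with h | h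
  · exact Or.inr (len_swp_mul_of_lt hk h)
  · left
    have h' := len_swp_mul_of_lt hk (y := swp k hk * y) (by simpa [swp] using h)
    rw [← mul_assoc, swp, swap_mul_self, one_mul] at h'
    exact h'.symm

end Length

section Paths

variable {n m : ℕ}

lemma inSJ.memJ_apply_iff {J : Fin n × Fin n} {w : Perm (Fin n)} (h : inSJ J w)
    (x : Fin n) : memJ J (w x) ↔ memJ J x := by
  by_cases hx : w x = x
  · rw [hx]
  · exact iff_of_true (h _ (w.injective.ne hx)) (h x hx)

lemma inSJ.apply_lt_apply_iff {J : Fin n × Fin n} {w : Perm (Fin n)} (h : inSJ J w)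
    {x x' : Fin n} (hxx' : ¬ (J.1 < J.2 ∧ memJ J x ∧ memJ J x')) :
    w x < w x' ↔ x < x' := by
  have hfix : ∀ z, ¬ memJ J z → w z = z := fun z hz => by_contra fun hne => hz (h z hne)
  by_cases hx : memJ J x <;> by_cases hx' : memJ J x'
  · have hJ : ¬ J.1 < J.2 := fun hJ => hxx' ⟨hJ, hx, hx'⟩
    have : x = x' := by
      unfold memJ at hx hx'
      simp only [Fin.le_def, Fin.lt_def, Fin.ext_iff] at hx hx' hJ ⊢
      omega
    simp [this]
  · have hwx := (h.memJ_apply_iff x).2 hx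
    rw [hfix x' hx']
    unfold memJ at hx hx' hwx
    simp only [Fin.le_def, Fin.lt_def, not_and_or, not_le] at hx hx' hwx ⊢
    omega
  · have hwx' := (h.memJ_apply_iff x').2 hx'
    rw [hfix x hx]
    unfold memJ at hx hx' hwx'
    simp only [Fin.le_def, Fin.lt_def, not_and_or, not_le] at hx hx' hwx' ⊢
    omega
  · rw [hfix x hx, hfix x' hx']

lemma posAt_succ (vs : Fin m → Perm (Fin n)) (k : ℕ) (hk : k < m) :
    posAt vs (k + 1) = vs ⟨k, hk⟩ * posAt vs k := by
  simp [posAt, List.take_add_one, hk]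

lemma memJ_posAt_succ_iff {Js : Fin m → Fin n × Fin n} {vs : Fin m → Perm (Fin n)}
    (hvs : IsPathFamily Js vs) (p : Fin m) (i : Fin n) :
    memJ (Js p) (posAt vs (p.1 + 1) i) ↔ memJ (Js p) (posAt vs p i) := by
  rw [posAt_succ vs p p.2]
  exact (hvs p).memJ_apply_iff _

lemma posAt_lt_posAt_iff_of_forall_not_meetAt {Js : Fin m → Fin n × Fin n}
    {vs : Fin m → Perm (Fin n)} (hvs : IsPathFamily Js vs) {i i' : Fin n} {a b : ℕ}
    (hab : a ≤ b) (hb : b ≤ m)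
    (hmeet : ∀ k : Fin m, a ≤ k.1 → k.1 < b → ¬ meetAt Js vs k i i') :
    posAt vs b i < posAt vs b i' ↔ posAt vs a i < posAt vs a i' := by
  induction b, hab using Nat.le_induction with
  | base => rfl
  | succ b hab ih =>
    have hbm : b < m := hb
    rw [← ih hbm.le fun k hak hkb => hmeet k hak (by omega), posAt_succ vs b hbm,
      Perm.mul_apply, Perm.mul_apply]
    exact (hvs _).apply_lt_apply_iff fun h =>
      hmeet ⟨b, hbm⟩ hab (by simp) ⟨⟨h.1, h.2.1⟩, h.1, h.2.2⟩

lemma posAt_zetaSwap_of_le (vs : Fin m → Perm (Fin n)) (p : Fin m) (i i' : Fin n)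
    {q : ℕ} (hq : q ≤ p.1) : posAt (zetaSwap vs p i i') q = posAt vs q := by
  induction q with
  | zero => rfl
  | succ q ih =>
    have hqp : (⟨q, by omega⟩ : Fin m) ≠ p := by simp [Fin.ext_iff]; omega
    rw [posAt_succ _ q (by omega), posAt_succ _ q (by omega), ih (by omega), zetaSwap,
      if_neg hqp]

lemma posAt_zetaSwap_of_lt (vs : Fin m → Perm (Fin n)) (p : Fin m) (i i' : Fin n)
    {q : ℕ} (hpq : p.1 < q) (hq : q ≤ m) :
    posAt (zetaSwap vs p i i') q = swap (posAt vs q i) (posAt vs q i') * posAt vs q := by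
  induction q, hpq using Nat.le_induction with
  | base =>
    rw [posAt_succ _ p p.2, posAt_succ vs p p.2, posAt_zetaSwap_of_le vs p i i' le_rfl,
      zetaSwap, if_pos rfl, posAt_succ vs p p.2, mul_assoc]
  | succ q hpq ih =>
    have hqm : q < m := hq
    have hqp : (⟨q, hqm⟩ : Fin m) ≠ p := by simp [Fin.ext_iff]; omega
    rw [posAt_succ _ q hqm, posAt_succ vs q hqm, ih hqm.le, zetaSwap, if_neg hqp,
      ← mul_assoc, mul_swap_eq_swap_mul, mul_assoc]
    rfl

lemma typeOf_zetaSwap (vs : Fin m → Perm (Fin n)) (p : Fin m) (i i' : Fin n) :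
    typeOf (zetaSwap vs p i i') = swap (typeOf vs i) (typeOf vs i') * typeOf vs :=
  posAt_zetaSwap_of_lt vs p i i' p.2 le_rfl

end Paths

lemma blockIdx_mono (lam : List ℕ) : Monotone (blockIdx lam) := fun i i' h => by
  unfold blockIdx
  refine (List.monotone_filter_right _ fun a ha => ?_).length_le
  simp only [decide_eq_true_eq] at ha ⊢
  omega

lemma colOf_apply_self {n : ℕ} (lam : List ℕ) (u : Perm (Fin n)) (i : Fin n) :
    colOf lam u (u i) = blockIdx lam i := by
  simp [colOf]

namespace ZetaData

variable {n m : ℕ} {Js : Fin m → Fin n × Fin n} {lam : List ℕ} {u : Perm (Fin n)}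
  {vs : Fin m → Perm (Fin n)} (Z : ZetaData Js lam u vs)

lemma posAt_lt_posAt_iff_typeOf_lt (hvs : IsPathFamily Js vs) {i i' : Fin n}
    (hi : colOf lam u i = Z.tc) (hi' : colOf lam u i' = Z.tc) (hii' : i ≠ i') :
    posAt vs (Z.p.1 + 1) i < posAt vs (Z.p.1 + 1) i' ↔ typeOf vs i < typeOf vs i' :=
  (posAt_lt_posAt_iff_of_forall_not_meetAt hvs Z.p.2 le_rfl fun k hk _ hmeet =>
    Z.hpMax k hk ⟨i, i', hii', hi, hi', hmeet⟩).symm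

lemma centeredAt_of_typeOf_between (hvs : IsPathFamily Js vs) {k : Fin n}
    (hk : blockIdx lam k = Z.tc) (hjk : typeOf vs (u Z.j) < typeOf vs (u k))
    (hkj' : typeOf vs (u k) < typeOf vs (u Z.j')) : centeredAt Js vs Z.p (u k) := by
  have hcol : ∀ {i : Fin n}, blockIdx lam i = Z.tc → colOf lam u (u i) = Z.tc := fun h =>
    (colOf_apply_self lam u _).trans h
  have hposjk := (Z.posAt_lt_posAt_iff_typeOf_lt hvs (hcol Z.hjcol) (hcol hk)
    (u.injective.ne (by rintro rfl; exact hjk.false))).2 hjk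
  have hposkj' := (Z.posAt_lt_posAt_iff_typeOf_lt hvs (hcol hk) (hcol Z.hjcol')
    (u.injective.ne (by rintro rfl; exact hkj'.false))).2 hkj'
  have hmemj := (memJ_posAt_succ_iff hvs Z.p _).2 Z.hjcent.2
  have hmemj' := (memJ_posAt_succ_iff hvs Z.p _).2 Z.hjcent'.2
  exact ⟨Z.hjcent.1, (memJ_posAt_succ_iff hvs Z.p _).1
    ⟨hmemj.1.trans hposjk.le, hposkj'.le.trans hmemj'.2⟩⟩

lemma not_typeOf_between (hvs : IsPathFamily Js vs) {k : Fin n}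
    (hk : blockIdx lam k = Z.tc) :
    ¬ (typeOf vs (u Z.j) < typeOf vs (u k) ∧ typeOf vs (u k) < typeOf vs (u Z.j')) := by
  rintro ⟨hjk, hkj'⟩
  have hkj'ne : k ≠ Z.j' := by rintro rfl; exact hkj'.false
  rcases Z.hmax k Z.j' hkj'ne hk Z.hjcol' (Z.centeredAt_of_typeOf_between hvs hk hjk hkj')
    Z.hjcent' hkj' with h | ⟨-, h⟩
  · exact h.false
  · exact h.not_gt hjk

lemma val_apply_j'_eq_succ
    (hu : ∀ i j : Fin n, i < j → blockIdx lam (i : ℕ) = blockIdx lam (j : ℕ) → u i < u j)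
    (hvs : IsPathFamily Js vs) {y : Perm (Fin n)} (hy : inYoung lam y)
    (hty : typeOf vs = u * y * u⁻¹) :
    ((y Z.j' : Fin n) : ℕ) = (y Z.j : ℕ) + 1 := by
  have huy : ∀ z, typeOf vs (u z) = u (y z) := by simp [hty]
  have hmono : StrictMonoOn u {i : Fin n | blockIdx lam i = Z.tc} :=
    fun a ha b hb hab => hu a b hab (ha.trans hb.symm)
  have hyj : blockIdx lam (y Z.j : ℕ) = Z.tc := (hy Z.j).trans Z.hjcol
  have hyj' : blockIdx lam (y Z.j' : ℕ) = Z.tc := (hy Z.j').trans Z.hjcol'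
  have hlt : y Z.j < y Z.j' := by
    have := Z.hord
    rwa [huy, huy, hmono.lt_iff_lt hyj hyj'] at this
  by_contra hne
  set x : Fin n := ⟨(y Z.j : ℕ) + 1, by omega⟩
  have hjx : y Z.j < x := Fin.lt_def.2 (Nat.lt_succ_self _)
  have hxj' : x < y Z.j' := by
    rw [Fin.lt_def] at hlt ⊢
    show (y Z.j : ℕ) + 1 < y Z.j'
    omega
  have hx : blockIdx lam x = Z.tc :=
    le_antisymm (hyj' ▸ blockIdx_mono lam hxj'.le) (hyj ▸ blockIdx_mono lam hjx.le)
  have hk : blockIdx lam (y.symm x : Fin n) = Z.tc := by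
    rw [← hy, apply_symm_apply, hx]
  refine Z.not_typeOf_between hvs hk ⟨?_, ?_⟩
  · rwa [huy, huy, apply_symm_apply, hmono.lt_iff_lt hyj hx]
  · rwa [huy, huy, apply_symm_apply, hmono.lt_iff_lt hx hyj']

end ZetaData

theorem zeta_move_length_step_general
    {n m : ℕ} (Js : Fin m → Fin n × Fin n) (lam : List ℕ) (u : Perm (Fin n))
    (hu : ∀ i j : Fin n, i < j →
      blockIdx lam (i : ℕ) = blockIdx lam (j : ℕ) → u i < u j)
    (vs : Fin m → Perm (Fin n)) (hvs : IsPathFamily Js vs)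
    (y : Perm (Fin n)) (hy : inYoung lam y)
    (hty : typeOf vs = u * y * u⁻¹)
    (Z : ZetaData Js lam u vs) :
    ∃ (k : ℕ) (hk : k + 1 < n),
      blockIdx lam k = blockIdx lam (k + 1) ∧
      typeOf (zetaSwap vs Z.p (u Z.j) (u Z.j')) = u * (swp k hk * y) * u⁻¹ ∧
      (len (swp k hk * y) + 1 = len y ∨ len (swp k hk * y) = len y + 1) := by
  have hsucc := Z.val_apply_j'_eq_succ hu hvs hy hty
  have hk : (y Z.j : ℕ) + 1 < n := hsucc ▸ (y Z.j').isLt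
  have hswp : swp (y Z.j) hk = swap (y Z.j) (y Z.j') := by
    simp only [swp, Fin.eta, ← hsucc]
  refine ⟨y Z.j, hk, ?_, ?_, len_swp_mul _ hk y⟩
  · rw [← hsucc, hy, hy, Z.hjcol, Z.hjcol']
  · have huy : ∀ z, typeOf vs (u z) = u (y z) := by simp [hty]
    rw [typeOf_zetaSwap, huy, huy, swap_apply_apply, hty, hswp]
    group

/-- Lemma 5.2 / `l:lengthdiff`.  Let `I` be an ordered set
partition of `[n]` of type `λ`, `u = u(I)`, and let `W = δ(U) ∈ T_I(G)` with
`U = U(π,u,yu) ∈ U_I(G)` not be fixed by `ζ` (the data `Z` records the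
choices `t, p, j, j'` made in the definition of `ζ`, and
`π̂ = zetaSwap vs Z.p (u Z.j) (u Z.j')` is the swapped family, so
`ζ(W) = δ(U(π̂,u,ŷu))`).  Then there is an adjacent-transposition generator
`s = s_k` of `S_λ` (i.e. `k` and `k+1` lie in a common block of `λ`) such
that `Û = U(π̂,u,ŷu)` with `ŷ = ys` (in the paper's product convention; as
functions `ŷ = s ∘ y`, i.e. `typeOf π̂ = u ∘ (s ∘ y) ∘ u⁻¹`); in particular
`ℓ(ŷ) = ℓ(y) ± 1`. -/
theorem zeta_move_length_step
    {n m : ℕ} (Js : Fin m → Fin n × Fin n) (hJs : ∀ p, (Js p).1 ≤ (Js p).2)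
    (lam : List ℕ) (hsum : lam.sum = n) (hpos : ∀ x ∈ lam, 0 < x)
    (hsort : lam.Pairwise (fun a b => b ≤ a))
    (u : Perm (Fin n))
    (hu : ∀ i j : Fin n, i < j →
      blockIdx lam (i : ℕ) = blockIdx lam (j : ℕ) → u i < u j)
    (vs : Fin m → Perm (Fin n)) (hvs : IsPathFamily Js vs)
    (y : Perm (Fin n)) (hy : inYoung lam y)
    (hty : typeOf vs = u * y * u⁻¹)
    (Z : ZetaData Js lam u vs) :
    ∃ (k : ℕ) (hk : k + 1 < n),
      blockIdx lam k = blockIdx lam (k + 1) ∧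
      typeOf (zetaSwap vs Z.p (u Z.j) (u Z.j')) = u * (swp k hk * y) * u⁻¹ ∧
      (len (swp k hk * y) + 1 = len y ∨ len (swp k hk * y) = len y + 1) :=
  zeta_move_length_step_general Js lam u hu vs hvs y hy hty Z

end
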